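/- arXiv:2502.06178 — 2 statements merged into one kernel-verified Lean document; each statement's English description precedes it below -/
import Mathlib

section
/- Let $\mathcal{X} \subset \mathbb{R}^d$ be compact and convex with nonempty interior, and let $\Psi : \mathbb{R}^d \to \mathbb{R}_{\ge 0}$ be continuous at $\bm{0}$ with $\Psi(\bm{0}) > 0$. Fix $\ell_0 > 0$. Then there exist constants $h_0, w_0 > 0$ such that for all $t \ge 1$, all $\ell \le \ell_0$, and all finite point sets $\bm{X}_t = \{\bm{x}_1,\dots,\bm{x}_t\} \subset \mathcal{X}$ with fill distance $h_{\mathcal{X},\bm{X}_t} \le h_0 \ell$, the kernel density $W_t(\bm{x}) = \sum_{i=1}^t \Psi((\bm{x}-\bm{x}_i)/\ell)$ satisfies $W_t(\bm{x}) \ge w_0 \, \ell^d \, h_{\mathcal{X},\bm{X}_t}^{-d}$ for every $\bm{x} \in \mathcal{X}$. -/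
/-!
Near `0` the kernel `Ψ` is bounded below by some `c > 0` on a ball of radius `ε`, so `W_t(x)` is
at least `c` times the number of sample points within `εℓ` of `x`. That number is counted by
volume: the homothety of ratio `θ ≍ ℓ` centred at `x` maps the convex set `X` into
`X ∩ B(x, εℓ/2)`, which is covered by the balls of radius `h` around the sample points lying
in `B(x, εℓ)` (as `h ≤ εℓ/2`). Comparing volumes gives at least `θ^d vol X / (h^d vol B₁)`
such points.
-/

open MeasureTheory Measure Metric Module Finset

noncomputable section

def fillDistance {E ι : Type*} [SeminormedAddCommGroup E] (X : Set E) (p : ι → E) : ℝ :=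
  ⨆ z : X, ⨅ i, ‖z.1 - p i‖

def kernelDensity {E ι : Type*} [Fintype ι] [AddCommGroup E] [Module ℝ E] (Ψ : E → ℝ) (ℓ : ℝ)
    (p : ι → E) (x : E) : ℝ :=
  ∑ i, Ψ (ℓ⁻¹ • (x - p i))

theorem mul_card_le_kernelDensity {E ι : Type*} [Fintype ι] [NormedAddCommGroup E]
    [NormedSpace ℝ E] {Ψ : E → ℝ} (hΨ : ∀ z, 0 ≤ Ψ z) {c ε ℓ : ℝ} (hℓ : 0 < ℓ)
    (hc : ∀ z ∈ closedBall 0 ε, c ≤ Ψ z) (p : ι → E) (x : E) :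
    c * #{i | ‖p i - x‖ ≤ ε * ℓ} ≤ kernelDensity Ψ ℓ p x := by
  have hnear : ∀ i ∈ ({i | ‖p i - x‖ ≤ ε * ℓ} : Finset ι), c ≤ Ψ (ℓ⁻¹ • (x - p i)) := by
    intro i hi
    refine hc _ ?_
    rw [mem_filter_univ] at hi
    rw [mem_closedBall_zero_iff, norm_smul, norm_inv, Real.norm_of_nonneg hℓ.le, norm_sub_rev,
      inv_mul_le_iff₀ hℓ, mul_comm]
    exact hi
  calc c * #{i | ‖p i - x‖ ≤ ε * ℓ} = #{i | ‖p i - x‖ ≤ ε * ℓ} • c := by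
        rw [nsmul_eq_mul, mul_comm]
    _ ≤ ∑ i ∈ {i | ‖p i - x‖ ≤ ε * ℓ}, Ψ (ℓ⁻¹ • (x - p i)) := card_nsmul_le_sum _ _ _ hnear
    _ ≤ kernelDensity Ψ ℓ p x :=
        sum_le_sum_of_subset_of_nonneg (subset_univ _) fun i _ _ => hΨ _

section FillDistance

variable {E ι : Type*} [SeminormedAddCommGroup E] {X : Set E} {p : ι → E}

theorem fillDistance_nonneg : 0 ≤ fillDistance X p :=
  Real.iSup_nonneg fun _ => Real.iInf_nonneg fun _ => norm_nonneg _

theorem exists_norm_sub_le_fillDistance [Finite ι] [Nonempty ι] (hX : Bornology.IsBounded X)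
    {z : E} (hz : z ∈ X) : ∃ i, ‖z - p i‖ ≤ fillDistance X p := by
  obtain ⟨C, hC⟩ := hX.subset_closedBall 0
  have hbdd : BddAbove (Set.range fun z : X => ⨅ i, ‖z.1 - p i‖) := by
    obtain ⟨i₀⟩ := ‹Nonempty ι›
    refine ⟨C + ‖p i₀‖, Set.forall_mem_range.2 fun w => ?_⟩
    calc ⨅ i, ‖w.1 - p i‖ ≤ ‖w.1 - p i₀‖ := ciInf_le (Finite.bddBelow_range _) i₀
      _ ≤ ‖w.1‖ + ‖p i₀‖ := norm_sub_le _ _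
      _ ≤ C + ‖p i₀‖ := by gcongr; simpa using hC w.2
  obtain ⟨i, hi⟩ := exists_eq_ciInf_of_finite (f := fun i => ‖z - p i‖)
  exact ⟨i, hi.trans_le (le_ciSup hbdd ⟨z, hz⟩)⟩

theorem inter_closedBall_subset_biUnion_closedBall_fillDistance [Fintype ι] [Nonempty ι]
    (hX : Bornology.IsBounded X) (x : E) {r ρ : ℝ} (hρ : fillDistance X p + r ≤ ρ) :
    X ∩ closedBall x r ⊆
      ⋃ i ∈ ({i | ‖p i - x‖ ≤ ρ} : Finset ι), closedBall (p i) (fillDistance X p) := by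
  rintro y ⟨hyX, hyx⟩
  obtain ⟨i, hi⟩ := exists_norm_sub_le_fillDistance (p := p) hX hyX
  refine Set.mem_biUnion (x := i) ?_ (by rwa [mem_closedBall, dist_eq_norm])
  rw [mem_closedBall, dist_eq_norm] at hyx
  rw [mem_coe, mem_filter_univ]
  calc ‖p i - x‖ ≤ ‖p i - y‖ + ‖y - x‖ := norm_sub_le_norm_sub_add_norm_sub ..
    _ ≤ ρ := by rw [norm_sub_rev]; linarith

end FillDistance

section Volume

variable {E ι : Type*} [NormedAddCommGroup E] [MeasurableSpace E] [BorelSpace E] (μ : Measure E)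
  [μ.IsAddHaarMeasure]

theorem addHaar_le_card_mul_of_subset_biUnion_closedBall {A : Set E} {S : Finset ι} {p : ι → E}
    {r : ℝ} (hA : A ⊆ ⋃ i ∈ S, closedBall (p i) r) :
    μ A ≤ #S * μ (closedBall 0 r) :=
  calc μ A ≤ ∑ i ∈ S, μ (closedBall (p i) r) :=
        (measure_mono hA).trans (measure_biUnion_finset_le _ _)
    _ = #S * μ (closedBall 0 r) := by simp [addHaar_closedBall_center]

variable [NormedSpace ℝ E] [FiniteDimensional ℝ E]

theorem Convex.addHaar_le_addHaar_inter_closedBall {X : Set E} (hX : Convex ℝ X) {x : E}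
    (hx : x ∈ X) {R θ : ℝ} (hXR : X ⊆ closedBall x R) (hθ0 : 0 ≤ θ) (hθ1 : θ ≤ 1) :
    ENNReal.ofReal (θ ^ finrank ℝ E) * μ X ≤ μ (X ∩ closedBall x (θ * R)) := by
  rw [← abs_of_nonneg (pow_nonneg hθ0 _), ← addHaar_image_homothety μ x]
  refine measure_mono (Set.image_subset_iff.2 fun y hy => ⟨?_, ?_⟩)
  · rw [AffineMap.homothety_eq_lineMap]
    exact hX.lineMap_mem hx hy ⟨hθ0, hθ1⟩
  · rw [mem_closedBall, dist_comm, dist_center_homothety, Real.norm_eq_abs,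
      abs_of_nonneg hθ0]
    exact mul_le_mul_of_nonneg_left (mem_closedBall.1 (hXR hy) |>.trans_eq' (dist_comm _ _)) hθ0

theorem Convex.pow_mul_measureReal_le_card_mul_fillDistance_pow [Fintype ι] [Nonempty ι]
    {X : Set E} (hX : Convex ℝ X) {x : E} (hx : x ∈ X) {p : ι → E} {R θ ρ : ℝ}
    (hXR : X ⊆ closedBall x R) (hθ0 : 0 ≤ θ) (hθ1 : θ ≤ 1)
    (hρ : fillDistance X p + θ * R ≤ ρ) :
    θ ^ finrank ℝ E * μ.real X ≤
      #{i | ‖p i - x‖ ≤ ρ} * (fillDistance X p ^ finrank ℝ E * μ.real (ball 0 1)) := by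
  have hcover := inter_closedBall_subset_biUnion_closedBall_fillDistance
    (isBounded_closedBall.subset hXR) x hρ
  have key := (hX.addHaar_le_addHaar_inter_closedBall μ hx hXR hθ0 hθ1).trans
    (addHaar_le_card_mul_of_subset_biUnion_closedBall μ hcover)
  calc θ ^ finrank ℝ E * μ.real X = (ENNReal.ofReal (θ ^ finrank ℝ E) * μ X).toReal := by
        simp [measureReal_def, hθ0]
    _ ≤ (#{i | ‖p i - x‖ ≤ ρ} * μ (closedBall 0 (fillDistance X p))).toReal :=
        ENNReal.toReal_mono (ENNReal.mul_ne_top (by simp) measure_closedBall_lt_top.ne) key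
    _ = _ := by simp [← measureReal_def, addHaar_real_closedBall μ 0 fillDistance_nonneg]

end Volume

end

/-- Lower bound on the kernel density in terms of the fill distance: if the fill
distance is small compared to the bandwidth, the kernel density is at least
`w0 * ℓ^d / h^d` everywhere on `X`. -/
theorem kde_lower_bound_by_fill_distance
    (d : ℕ) (X : Set (EuclideanSpace ℝ (Fin d)))
    (hXc : IsCompact X) (hXconv : Convex ℝ X) (hXint : (interior X).Nonempty)
    (Ψ : EuclideanSpace ℝ (Fin d) → ℝ)
    (hΨnn : ∀ z, 0 ≤ Ψ z) (hΨ0 : 0 < Ψ 0) (hΨcont : ContinuousAt Ψ 0)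
    (ℓ0 : ℝ) (hℓ0 : 0 < ℓ0) :
    ∃ h0 w0 : ℝ, 0 < h0 ∧ 0 < w0 ∧
      ∀ (t : ℕ), 1 ≤ t →
        ∀ (ℓ : ℝ), 0 < ℓ → ℓ ≤ ℓ0 →
          ∀ xs : Fin t → EuclideanSpace ℝ (Fin d), (∀ i, xs i ∈ X) →
            (⨆ z : X, ⨅ i, ‖z.1 - xs i‖) ≤ h0 * ℓ →
              ∀ x ∈ X,
                w0 * ℓ ^ d / (⨆ z : X, ⨅ i, ‖z.1 - xs i‖) ^ d
                  ≤ ∑ i, Ψ (ℓ⁻¹ • (x - xs i)) := by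
  obtain ⟨ε, hε, hεΨ⟩ := nhds_basis_closedBall.eventually_iff.1
    (hΨcont.eventually (lt_mem_nhds (half_lt_self hΨ0)))
  set D := diam X + 1
  have hD : 0 < D := by positivity
  have hXD : ∀ x ∈ X, X ⊆ closedBall x D := fun x hx y hy =>
    (dist_le_diam_of_mem hXc.isBounded hy hx).trans (by linarith)
  set k := min ℓ0⁻¹ (ε / (2 * D))
  have hk : 0 < k := by positivity
  set VX := volume.real X
  set VB := volume.real (ball (0 : EuclideanSpace ℝ (Fin d)) 1)
  have hVX : 0 < VX := ENNReal.toReal_pos (measure_pos_of_nonempty_interior _ hXint).ne'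
    hXc.measure_lt_top.ne
  have hVB : 0 < VB := ENNReal.toReal_pos (measure_ball_pos _ _ one_pos).ne'
    measure_ball_lt_top.ne
  refine ⟨ε / 2, Ψ 0 / 2 * k ^ d * VX / VB, by positivity, by positivity, ?_⟩
  intro t ht ℓ hℓ hℓℓ0 xs _ hfill x hx
  change fillDistance X xs ≤ ε / 2 * ℓ at hfill
  change _ / fillDistance X xs ^ d ≤ kernelDensity Ψ ℓ xs x
  have : Nonempty (Fin t) := Fin.pos_iff_nonempty.1 ht
  have hθ1 : k * ℓ ≤ 1 := by
    calc k * ℓ ≤ ℓ0⁻¹ * ℓ0 := by gcongr; exact min_le_left _ _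
      _ = 1 := inv_mul_cancel₀ hℓ0.ne'
  have hθD : k * ℓ * D ≤ ε / 2 * ℓ := by
    calc k * ℓ * D ≤ ε / (2 * D) * ℓ * D := by gcongr; exact min_le_right _ _
      _ = ε / 2 * ℓ := by field_simp
  have hcount := hXconv.pow_mul_measureReal_le_card_mul_fillDistance_pow volume hx (p := xs)
    (ρ := ε * ℓ) (hXD x hx) (by positivity) hθ1 (by linarith)
  rw [finrank_euclideanSpace_fin] at hcount
  calc _ = Ψ 0 / 2 * ((k * ℓ) ^ d * VX / VB / fillDistance X xs ^ d) := by ring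
    _ ≤ Ψ 0 / 2 * #{i | ‖xs i - x‖ ≤ ε * ℓ} := by
        gcongr
        refine div_le_of_le_mul₀ (pow_nonneg fillDistance_nonneg _) (by positivity) ?_
        rw [div_le_iff₀ hVB]
        linarith
    _ ≤ kernelDensity Ψ ℓ xs x :=
        mul_card_le_kernelDensity hΨnn hℓ (fun z hz => (hεΨ hz).le) xs x
end

section
/- Let $\mathcal{X} \subset \mathbb{R}^d$ be compact and $\Psi : \mathbb{R}^d \to \mathbb{R}_{\ge 0}$ be supported in $B(\bm{0},R_\Psi)$, continuous at $\bm{0}$ with $\Psi(\bm{0}) > 0$. Fix $\ell > 0$ and let $\{\bm{x}_t\}_{t \ge 1}$ be generated by density-based exploration: $\bm{x}_{t+1} \in \arg\min_{\bm{x}\in\mathcal{X}} W_t(\bm{x})$ with $W_t(\bm{x}) = \sum_{i=1}^t \Psi((\bm{x}-\bm{x}_i)/\ell)$. Then the fill distance satisfies $\inf_t h_{\mathcal{X},\bm{X}_t} \le R_\Psi \ell$, where $\bm{X}_t = \{\bm{x}_1,\dots,\bm{x}_t\}$ and $h_{\mathcal{X},\bm{X}_t} = \sup_{\bm{x}\in\mathcal{X}}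 \min_i \|\bm{x}-\bm{x}_i\|$. -/
open Filter
open Topology

set_option maxHeartbeats 1000000 in
/-- Algorithmic consistency of density-based exploration: the fill distance of
the DE iterates eventually drops below `R_Ψ ℓ`. -/
theorem de_algorithmic_consistency
    (d : ℕ) (X : Set (EuclideanSpace ℝ (Fin d)))
    (hX : IsCompact X) (hXne : X.Nonempty)
    (Ψ : EuclideanSpace ℝ (Fin d) → ℝ) (RΨ : ℝ)
    (hΨnn : ∀ z, 0 ≤ Ψ z) (hΨsupp : ∀ z, Ψ z ≠ 0 → ‖z‖ < RΨ)
    (hΨ0 : 0 < Ψ 0) (hΨcont : ContinuousAt Ψ 0)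
    (ℓ : ℝ) (hℓ : 0 < ℓ)
    (x : ℕ → EuclideanSpace ℝ (Fin d)) (hxX : ∀ t, x t ∈ X)
    (hDE : ∀ t : ℕ, 1 ≤ t → ∀ z ∈ X,
      ∑ i ∈ Finset.range t, Ψ (ℓ⁻¹ • (x t - x i)) ≤
        ∑ i ∈ Finset.range t, Ψ (ℓ⁻¹ • (z - x i))) :
    (⨅ t : ℕ, ⨆ z : X, ⨅ i : Fin (t + 1), ‖z.1 - x i‖) ≤ RΨ * ℓ := by
  by_contra hcon
  push_neg at hcon
  haveI : Nonempty X := hXne.to_subtype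
  -- norm of scaled vector
  have hnorm : ∀ v : EuclideanSpace ℝ (Fin d), ‖ℓ⁻¹ • v‖ = ℓ⁻¹ * ‖v‖ := by
    intro v
    rw [norm_smul, Real.norm_eq_abs, abs_of_pos (inv_pos.mpr hℓ)]
  -- bound on X
  obtain ⟨C, hC⟩ := hX.isBounded.subset_closedBall 0
  have hbdd : ∀ t : ℕ, BddAbove (Set.range fun z : X => ⨅ i : Fin (t + 1), ‖z.1 - x i‖) := by
    intro t
    refine ⟨2 * C, ?_⟩
    rintro r ⟨z, rfl⟩
    have h1 : (⨅ i : Fin (t + 1), ‖z.1 - x i‖) ≤ ‖z.1 - x 0‖ := by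
      have h := ciInf_le (f := fun i : Fin (t + 1) => ‖z.1 - x i‖)
        (Finite.bddBelow_range _) ⟨0, Nat.succ_pos t⟩
      simpa using h
    have hz' : ‖z.1‖ ≤ C := by simpa using hC z.2
    have hx0 : ‖x 0‖ ≤ C := by simpa using hC (hxX 0)
    calc (⨅ i : Fin (t + 1), ‖z.1 - x i‖) ≤ ‖z.1 - x 0‖ := h1
      _ ≤ ‖z.1‖ + ‖x 0‖ := norm_sub_le _ _
      _ ≤ 2 * C := by linarith
  have hFnn : ∀ t : ℕ, (0 : ℝ) ≤ ⨆ z : X, ⨅ i : Fin (t + 1), ‖z.1 - x i‖ := by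
    intro t
    obtain ⟨w⟩ := (inferInstance : Nonempty X)
    refine le_trans ?_ (le_ciSup (hbdd t) w)
    exact le_ciInf fun i => norm_nonneg _
  -- choose far points
  have hfarpt : ∀ t : ℕ, ∃ z : X, RΨ * ℓ < ⨅ i : Fin (t + 1), ‖z.1 - x i‖ := by
    intro t
    have h1 : RΨ * ℓ < ⨆ z : X, ⨅ i : Fin (t + 1), ‖z.1 - x i‖ :=
      lt_of_lt_of_le hcon (ciInf_le ⟨0, by rintro r ⟨s, rfl⟩; exact hFnn s⟩ t)
    exact (lt_ciSup_iff (hbdd t)).mp h1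
  choose z hz using hfarpt
  -- convergent subsequence of the far points
  obtain ⟨x', hx'X, ψ, hψ, hzt⟩ := hX.tendsto_subseq (fun t => (z t).2)
  -- x' stays far from all iterates
  have hfar : ∀ i : ℕ, RΨ * ℓ ≤ ‖x' - x i‖ := by
    intro i
    have htend : Tendsto (fun k => ‖(z (ψ k)).1 - x i‖) atTop (𝓝 ‖x' - x i‖) :=
      ((continuous_norm.comp (continuous_id.sub continuous_const)).continuousAt).tendsto.comp hzt
    refine ge_of_tendsto htend ?_
    filter_upwards [eventually_ge_atTop i] with k hk
    have hik : i < ψ k + 1 := Nat.lt_succ_of_le (le_trans hk (hψ.le_apply))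
    have := hz (ψ k)
    calc RΨ * ℓ ≤ ⨅ j : Fin (ψ k + 1), ‖(z (ψ k)).1 - x j‖ := le_of_lt this
      _ ≤ ‖(z (ψ k)).1 - x i‖ := by
          have h := ciInf_le (f := fun j : Fin (ψ k + 1) => ‖(z (ψ k)).1 - x j‖)
            (Finite.bddBelow_range _) ⟨i, hik⟩
          simpa using h
  -- Ψ vanishes at x' relative to every iterate
  have hW0 : ∀ i : ℕ, Ψ (ℓ⁻¹ • (x' - x i)) = 0 := by
    intro i
    by_contra h
    have h1 := hΨsupp _ h
    rw [hnorm] at h1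
    have h2 : ‖x' - x i‖ < RΨ * ℓ := by
      have := (div_lt_iff₀ hℓ).mp (by rwa [inv_mul_eq_div] at h1)
      linarith
    exact absurd (hfar i) (not_le.mpr h2)
  -- hence each DE increment vanishes
  have hzero : ∀ t : ℕ, 1 ≤ t → ∀ i < t, Ψ (ℓ⁻¹ • (x t - x i)) = 0 := by
    intro t ht i hi
    have hsum := hDE t ht x' hx'X
    have hrhs : ∑ i ∈ Finset.range t, Ψ (ℓ⁻¹ • (x' - x i)) = 0 :=
      Finset.sum_eq_zero fun i _ => hW0 i
    rw [hrhs] at hsum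
    have hall := (Finset.sum_eq_zero_iff_of_nonneg
      (fun i _ => hΨnn (ℓ⁻¹ • (x t - x i)))).mp
      (le_antisymm hsum (Finset.sum_nonneg fun i _ => hΨnn _))
    exact hall i (Finset.mem_range.mpr hi)
  -- positivity of Ψ near 0
  have h1 : ∀ᶠ w in nhds (0 : EuclideanSpace ℝ (Fin d)), 0 < Ψ w :=
    hΨcont.eventually_const_lt hΨ0
  rw [Metric.eventually_nhds_iff] at h1
  obtain ⟨δ, hδ, hδpos⟩ := h1
  -- convergent subsequence of the iterates
  obtain ⟨p, hpX, φ, hφ, hxp⟩ := hX.tendsto_subseq hxX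
  have hcauchy : CauchySeq (x ∘ φ) := hxp.cauchySeq
  rw [Metric.cauchySeq_iff] at hcauchy
  obtain ⟨N, hN⟩ := hcauchy (δ * ℓ) (mul_pos hδ hℓ)
  have hlt : φ N < φ (N + 1) := hφ (Nat.lt_succ_self N)
  have hd := hN (N + 1) (Nat.le_succ N) N le_rfl
  have hpos : 0 < Ψ (ℓ⁻¹ • (x (φ (N + 1)) - x (φ N))) := by
    apply hδpos
    rw [dist_zero_right, hnorm]
    have : ‖x (φ (N + 1)) - x (φ N)‖ < δ * ℓ := by
      rw [← dist_eq_norm]; exact hd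
    calc ℓ⁻¹ * ‖x (φ (N + 1)) - x (φ N)‖ < ℓ⁻¹ * (δ * ℓ) := by
          exact mul_lt_mul_of_pos_left this (inv_pos.mpr hℓ)
      _ = δ := by field_simp
  have hz0 := hzero (φ (N + 1)) (le_trans (Nat.one_le_iff_ne_zero.mpr (Nat.succ_ne_zero N))
    (hφ.le_apply)) (φ N) hlt
  rw [hz0] at hpos
  exact lt_irrefl 0 hpos
end
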